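/- There exist injective point configurations x, y : Fin 6 → EuclideanSpace ℝ (Fin 3) and a single multiset M of real numbers such that: (1) for every i ∈ Fin 6, the multiset {dist (x i) (x j) : j ∈ Fin 6} equals M, and for every i ∈ Fin 6, the multiset {dist (y i) (y j) : j ∈ Fin 6} equals M; and (2) there exists δ > 0 such that y contains at least two distinct 3-element subsets {i, j, k} whose three pairwise distances are all equal to δ (equilateral triangles of side δ), while x contains no 3-element subset whose three pairwise distances are all equal to δ. (Hence counting equilateral triangles, a piece of 3-order geometric information, distinguishes configurations whose per-node distance lists are identical.) -/

import Mathlib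

/-!
Both configurations have integer coordinates. The regular hexagon `x` has as vertices the
permutations of `(1, -1, 0)`, the triangular antiprism `y` the unit vectors `eᵢ` together with
`(2, 2, 2) - eᵢ`. At every vertex of either one the squared distances are `0, 2, 2, 6, 6, 8`.
For `δ = √2` the antiprism has its two triangular faces, whereas the pairs at distance `√2` in
the hexagon form a 6-cycle, which contains no triangle. Since the distance between integer
points is the square root of an integer, everything reduces to a finite computation over `ℤ`.
-/

/-- A 3-element subset `s` of the index set forms an equilateral triangle of side `δ`
in the configuration `x` if all pairwise distances between distinct points of `s`
are equal to `δ`. -/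
def IsEquilateralTriangle {n : ℕ} (x : Fin n → EuclideanSpace ℝ (Fin 3))
    (s : Finset (Fin n)) (δ : ℝ) : Prop :=
  s.card = 3 ∧ ∀ i ∈ s, ∀ j ∈ s, i ≠ j → dist (x i) (x j) = δ

section IntegerPoints

variable {ι : Type*}

def sqDist [Fintype ι] (p q : ι → ℤ) : ℤ := ∑ k, (p k - q k) ^ 2

lemma sqDist_nonneg [Fintype ι] (p q : ι → ℤ) : 0 ≤ sqDist p q :=
  Finset.sum_nonneg fun _ _ => sq_nonneg _

noncomputable def intPoint (p : ι → ℤ) : EuclideanSpace ℝ ι :=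
  WithLp.toLp 2 fun k => (p k : ℝ)

lemma intPoint_injective : Function.Injective (intPoint (ι := ι)) := by
  intro p q h
  funext k
  simpa [intPoint] using congrFun (congrArg WithLp.ofLp h) k

lemma dist_intPoint [Fintype ι] (p q : ι → ℤ) :
    dist (intPoint p) (intPoint q) = √(sqDist p q) := by
  simp [EuclideanSpace.dist_eq, intPoint, sqDist, Real.dist_eq, sq_abs]

lemma map_dist_intPoint [Fintype ι] {κ : Type*} [Fintype κ] (p : κ → ι → ℤ) (i : κ) :
    Multiset.map (fun j => dist (intPoint (p i)) (intPoint (p j))) Finset.univ.val =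
      Multiset.map (fun d : ℤ => √d)
        (Multiset.map (fun j => sqDist (p i) (p j)) Finset.univ.val) := by
  simp [dist_intPoint]

end IntegerPoints

lemma isEquilateralTriangle_intPoint_iff {n : ℕ} (p : Fin n → Fin 3 → ℤ)
    (s : Finset (Fin n)) (m : ℕ) :
    IsEquilateralTriangle (intPoint ∘ p) s √m ↔
      s.card = 3 ∧ ∀ i ∈ s, ∀ j ∈ s, i ≠ j → sqDist (p i) (p j) = m := by
  have sqrt_eq_iff (i j : Fin n) :
      √(sqDist (p i) (p j) : ℝ) = √m ↔ sqDist (p i) (p j) = m := by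
    rw [Real.sqrt_inj (by exact_mod_cast sqDist_nonneg _ _) m.cast_nonneg]
    exact_mod_cast Iff.rfl
  simp only [IsEquilateralTriangle, Function.comp_apply, dist_intPoint, sqrt_eq_iff]

def hexagon : Fin 6 → Fin 3 → ℤ :=
  ![![1, -1, 0], ![1, 0, -1], ![0, 1, -1], ![-1, 1, 0], ![-1, 0, 1], ![0, -1, 1]]

def antiprism : Fin 6 → Fin 3 → ℤ :=
  ![![1, 0, 0], ![0, 1, 0], ![0, 0, 1], ![1, 2, 2], ![2, 1, 2], ![2, 2, 1]]

lemma hexagon_injective : Function.Injective hexagon := by decide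

lemma antiprism_injective : Function.Injective antiprism := by decide

lemma map_sqDist_hexagon (i : Fin 6) :
    Multiset.map (fun j => sqDist (hexagon i) (hexagon j)) Finset.univ.val =
      {0, 2, 2, 6, 6, 8} := by
  revert i; decide

lemma map_sqDist_antiprism (i : Fin 6) :
    Multiset.map (fun j => sqDist (antiprism i) (antiprism j)) Finset.univ.val =
      {0, 2, 2, 6, 6, 8} := by
  revert i; decide

theorem exists_six_point_configs_same_distance_lists_distinguished_by_triangles :
    ∃ (x y : Fin 6 → EuclideanSpace ℝ (Fin 3)) (M : Multiset ℝ),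
      Function.Injective x ∧ Function.Injective y ∧
      (∀ i : Fin 6,
        Multiset.map (fun j => dist (x i) (x j)) (Finset.univ : Finset (Fin 6)).val = M) ∧
      (∀ i : Fin 6,
        Multiset.map (fun j => dist (y i) (y j)) (Finset.univ : Finset (Fin 6)).val = M) ∧
      ∃ δ : ℝ, 0 < δ ∧
        (∃ s t : Finset (Fin 6), s ≠ t ∧
          IsEquilateralTriangle y s δ ∧ IsEquilateralTriangle y t δ) ∧
        ¬ ∃ s : Finset (Fin 6), IsEquilateralTriangle x s δ := by
  refine ⟨intPoint ∘ hexagon, intPoint ∘ antiprism,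
    Multiset.map (fun d : ℤ => √d) {0, 2, 2, 6, 6, 8},
    intPoint_injective.comp hexagon_injective, intPoint_injective.comp antiprism_injective,
    fun i => (map_dist_intPoint hexagon i).trans (congrArg _ (map_sqDist_hexagon i)),
    fun i => (map_dist_intPoint antiprism i).trans
      (congrArg _ (map_sqDist_antiprism i)),
    √(2 : ℕ), Real.sqrt_pos.2 (by norm_num), ⟨{0, 1, 2}, {3, 4, 5}, by decide, ?_, ?_⟩, ?_⟩
  · exact (isEquilateralTriangle_intPoint_iff antiprism _ 2).2 (by decide)
  · exact (isEquilateralTriangle_intPoint_iff antiprism _ 2).2 (by decide)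
  · simp only [isEquilateralTriangle_intPoint_iff]
    decide
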